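/- arXiv:2410.18473 — 2 statements merged into one kernel-verified Lean document; each statement's English description precedes it below -/
import Mathlib

section
/- Let Γ be a set, N an equivalent norm on c₀(Γ) that is solid and normalized (N(e_γ) = 1 for all γ ∈ Γ), α ∈ Γ, K > 1, and l > 1 such that N(e_α + (1/K)·e_β) ≥ l for every β ≠ α. Let η be a real number with (K + 1)/(l·K + 1) < η < 1. Then there exists 𝔞 < 1/K such that for every β ∈ Γ with β ≠ α and every a ∈ ℝ with N(η·e_α + a·e_β) ≤ 1, one has |a| ≤ 𝔞. -/
open Classical in
/-- The unit vector (indicator of `{γ}`) in the space of real functions on `Γ`. -/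
noncomputable def eVec {Γ : Type*} (γ : Γ) : Γ → ℝ := fun δ => if δ = γ then 1 else 0

/-- Membership in `c₀(Γ)`: functions vanishing at infinity. -/
def IsC0 {Γ : Type*} (x : Γ → ℝ) : Prop := ∀ ε : ℝ, 0 < ε → {γ | ε ≤ |x γ|}.Finite

/-- The supremum norm of a function on `Γ`. -/
noncomputable def supNorm {Γ : Type*} (x : Γ → ℝ) : ℝ := ⨆ γ, |x γ|

/-!
If `b = |a| > η/K`, then
`e_α + K⁻¹ e_β = (bK)⁻¹ (η e_α + b e_β) + (1 - η/(bK)) e_α` with both coefficients nonnegative,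
so the triangle inequality gives `l ≤ 1 + (1 - η)/(bK)`, i.e. `b ≤ (1 - η)/((l - 1)K)`.
Hence `|a| ≤ max η ((1 - η)/(l - 1)) / K`, and the lower bound on `η` is exactly what makes
`(1 - η)/(l - 1) < 1`.
-/

section C0

variable {Γ : Type*}

lemma isC0_of_finite_support {x : Γ → ℝ} (hx : (Function.support x).Finite) : IsC0 x :=
  fun _ hε => hx.subset fun _ hγ => abs_pos.mp (hε.trans_le hγ)

lemma finite_support_eVec (γ : Γ) : (Function.support (eVec γ)).Finite := by
  refine (Set.finite_singleton γ).subset fun δ hδ => ?_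
  by_contra h
  exact hδ (if_neg h)

lemma isC0_eVec (γ : Γ) : IsC0 (eVec γ) :=
  isC0_of_finite_support (finite_support_eVec γ)

lemma isC0_smul_eVec_add_smul_eVec (c d : ℝ) (α β : Γ) :
    IsC0 (c • eVec α + d • eVec β) :=
  isC0_of_finite_support <|
    (((finite_support_eVec α).subset (Function.support_smul_subset_right _ _)).union
      ((finite_support_eVec β).subset (Function.support_smul_subset_right _ _))).subset
      (Function.support_add _ _)

lemma IsC0.smul {x : Γ → ℝ} (hx : IsC0 x) (c : ℝ) : IsC0 (c • x) := by
  intro ε hε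
  rcases eq_or_ne c 0 with rfl | hc
  · simp [not_le.mpr hε]
  · refine (hx (ε / |c|) (by positivity)).subset fun γ hγ => ?_
    simp only [Set.mem_ofPred_eq, Pi.smul_apply, smul_eq_mul, abs_mul] at hγ ⊢
    rwa [div_le_iff₀' (abs_pos.mpr hc)]

lemma abs_smul_eVec_add_smul_eVec_apply {α β : Γ} (hβ : β ≠ α) (c d : ℝ) (γ : Γ) :
    |(c • eVec α + |d| • eVec β) γ| = |(c • eVec α + d • eVec β) γ| := by
  by_cases hα : γ = α
  · subst hα; simp [eVec, hβ.symm]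
  · by_cases hβ' : γ = β
    · subst hβ'; simp [eVec, hα]
    · simp [eVec, hα, hβ']

end C0

section Norm

variable {Γ : Type*} {N : (Γ → ℝ) → ℝ}

lemma norm_smul_add_smul_le
    (hsmul : ∀ (a : ℝ) (x : Γ → ℝ), IsC0 x → N (a • x) = |a| * N x)
    (htri : ∀ x y : Γ → ℝ, IsC0 x → IsC0 y → N (x + y) ≤ N x + N y)
    {x y : Γ → ℝ} (hx : IsC0 x) (hy : IsC0 y) (s t : ℝ) :
    N (s • x + t • y) ≤ |s| * N x + |t| * N y := by
  rw [← hsmul s x hx, ← hsmul t y hy]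
  exact htri _ _ (hx.smul s) (hy.smul t)

lemma mul_le_of_norm_smul_eVec_add_smul_eVec_le_one
    (hsmul : ∀ (a : ℝ) (x : Γ → ℝ), IsC0 x → N (a • x) = |a| * N x)
    (htri : ∀ x y : Γ → ℝ, IsC0 x → IsC0 y → N (x + y) ≤ N x + N y)
    {α β : Γ} (hα : N (eVec α) = 1) {K l η b : ℝ} (hl : l ≤ N (eVec α + (1 / K) • eVec β))
    (hb : 0 < b) (hK : 0 < K) (hηb : η < b * K) (hN : N (η • eVec α + b • eVec β) ≤ 1) :
    (l - 1) * (b * K) ≤ 1 - η := by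
  set t := 1 / (b * K)
  have ht : 0 < t := by positivity
  have htbK : t * (b * K) = 1 := one_div_mul_cancel (by positivity)
  have htη : 0 ≤ 1 - t * η := by nlinarith
  have hdecomp : eVec α + (1 / K) • eVec β =
      t • (η • eVec α + b • eVec β) + (1 - t * η) • eVec α := by
    have htb : t * b = 1 / K := by rw [eq_div_iff hK.ne', mul_assoc, htbK]
    rw [smul_add, smul_smul, smul_smul, htb]
    module
  have hl' : l ≤ t + (1 - t * η) := calc
    l ≤ N (t • (η • eVec α + b • eVec β) + (1 - t * η) • eVec α) := hdecomp ▸ hl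
    _ ≤ |t| * N (η • eVec α + b • eVec β) + |1 - t * η| * N (eVec α) :=
      norm_smul_add_smul_le hsmul htri (isC0_smul_eVec_add_smul_eVec η b α β) (isC0_eVec α) _ _
    _ ≤ t * 1 + (1 - t * η) * 1 := by
      rw [abs_of_pos ht, abs_of_nonneg htη, hα]
      gcongr
    _ = t + (1 - t * η) := by ring
  nlinarith

end Norm

lemma two_sub_lt_of_div_lt {K l η : ℝ} (hK : 1 < K) (hl : 1 < l)
    (hη : (K + 1) / (l * K + 1) < η) : 2 - l < η := by
  have hlK : 0 < l * K + 1 := by nlinarith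
  rw [div_lt_iff₀ hlK] at hη
  by_contra! h
  nlinarith [mul_le_mul_of_nonneg_right h hlK.le,
    mul_pos (by linarith : (0 : ℝ) < K) (mul_pos (sub_pos.2 hl) (sub_pos.2 hl))]

theorem claim_bound_on_coordinates_general
    {Γ : Type*} (N : (Γ → ℝ) → ℝ)
    (hsmul : ∀ (a : ℝ) (x : Γ → ℝ), IsC0 x → N (a • x) = |a| * N x)
    (htri : ∀ x y : Γ → ℝ, IsC0 x → IsC0 y → N (x + y) ≤ N x + N y)
    (hsolid : ∀ x y : Γ → ℝ, IsC0 x → IsC0 y → (∀ γ, |x γ| ≤ |y γ|) → N x ≤ N y)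
    (hnormalized : ∀ γ : Γ, N (eVec γ) = 1)
    (α : Γ) (K l : ℝ) (hK : 1 < K) (hl : 1 < l)
    (hinf : ∀ β : Γ, β ≠ α → l ≤ N (eVec α + (1 / K) • eVec β))
    (η : ℝ) (hη₁ : (K + 1) / (l * K + 1) < η) (hη₂ : η < 1) :
    ∃ a₀ : ℝ, a₀ < 1 / K ∧
      ∀ β : Γ, β ≠ α → ∀ a : ℝ, N (η • eVec α + a • eVec β) ≤ 1 → |a| ≤ a₀ := by
  have hK0 : 0 < K := by linarith
  have hl1 : 0 < l - 1 := by linarith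
  have hη₀ : 0 < η := (div_pos (by linarith) (by nlinarith)).trans hη₁
  have hηl := two_sub_lt_of_div_lt hK hl hη₁
  refine ⟨max (η / K) ((1 - η) / ((l - 1) * K)), max_lt ?_ ?_, fun β hβ a ha => ?_⟩
  · gcongr
  · rw [div_lt_div_iff₀ (by positivity) hK0]
    nlinarith
  have hN : N (η • eVec α + |a| • eVec β) ≤ 1 :=
    (hsolid _ _ (isC0_smul_eVec_add_smul_eVec _ _ _ _) (isC0_smul_eVec_add_smul_eVec _ _ _ _)
      fun γ => (abs_smul_eVec_add_smul_eVec_apply hβ η a γ).le).trans ha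
  rcases le_or_gt (|a|) (η / K) with hsmall | hlarge
  · exact le_max_of_le_left hsmall
  · have hpos : 0 < |a| := (div_pos hη₀ hK0).trans hlarge
    refine le_max_of_le_right ((le_div_iff₀ (by positivity)).2 ?_)
    have := mul_le_of_norm_smul_eVec_add_smul_eVec_le_one hsmul htri (hnormalized α) (hinf β hβ)
      hpos hK0 ((div_lt_iff₀ hK0).1 hlarge) hN
    linarith

/-- Let `N` be an equivalent solid normalized norm on `c₀(Γ)`, `α ∈ Γ`, `K > 1` and
`l > 1` with `N (e_α + (1/K) e_β) ≥ l` for all `β ≠ α`, and let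
`(K+1)/(lK+1) < η < 1`.  Then there is `𝔞 < 1/K` such that whenever
`N (η e_α + a e_β) ≤ 1` for some `β ≠ α`, one has `|a| ≤ 𝔞`. -/
theorem claim_bound_on_coordinates
    {Γ : Type*} (N : (Γ → ℝ) → ℝ)
    (hzero : ∀ x : Γ → ℝ, IsC0 x → (N x = 0 ↔ x = 0))
    (hsmul : ∀ (a : ℝ) (x : Γ → ℝ), IsC0 x → N (a • x) = |a| * N x)
    (htri : ∀ x y : Γ → ℝ, IsC0 x → IsC0 y → N (x + y) ≤ N x + N y)
    (hequiv : ∃ c C : ℝ, 0 < c ∧ 0 < C ∧ ∀ x : Γ → ℝ, IsC0 x →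
      c * supNorm x ≤ N x ∧ N x ≤ C * supNorm x)
    (hsolid : ∀ x y : Γ → ℝ, IsC0 x → IsC0 y → (∀ γ, |x γ| ≤ |y γ|) → N x ≤ N y)
    (hnormalized : ∀ γ : Γ, N (eVec γ) = 1)
    (α : Γ) (K l : ℝ) (hK : 1 < K) (hl : 1 < l)
    (hinf : ∀ β : Γ, β ≠ α → l ≤ N (eVec α + (1 / K) • eVec β))
    (η : ℝ) (hη₁ : (K + 1) / (l * K + 1) < η) (hη₂ : η < 1) :
    ∃ a₀ : ℝ, a₀ < 1 / K ∧
      ∀ β : Γ, β ≠ α → ∀ a : ℝ, N (η • eVec α + a • eVec β) ≤ 1 → |a| ≤ a₀ :=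
  claim_bound_on_coordinates_general N hsmul htri hsolid hnormalized α K l hK hl hinf η hη₁ hη₂
end

section
/- Let X be a strictly convex real Banach space (i.e. ‖x‖ = ‖y‖ = 1 and ‖x + y‖ = 2 imply x = y). Let Z := X × c₀(ℕ), define Φ(x, y) = ‖x‖ + Σ_{n=1}^∞ (y_n)^{2n} for (x, y) ∈ Z, and let |||z||| := inf{ λ > 0 : Φ(z/λ) ≤ 1 }. Then the norm |||·||| on Z is strictly convex: if z, w ∈ Z satisfy |||z||| = |||w||| = 1 and |||z + w||| = 2, then z = w. -/
/-!
Since `t ↦ Φ(t z)` is continuous, `|||z||| = c > 0` forces `Φ(z / c) = 1`. Hence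
`Φ(z) = Φ(w) = Φ((z + w) / 2) = 1`. The even powers are strictly convex, so the series part of
`Φ` is strictly midpoint convex and `z, w` have the same sequence component; then
`‖(x + x') / 2‖ = ‖x‖ = ‖x'‖` for their `X` components, and strict convexity of `X` gives `x = x'`.
-/

/-- Membership in `c₀(ℕ)`: sequences converging to `0`. -/
def IsC0Seq (y : ℕ → ℝ) : Prop := Filter.Tendsto y Filter.atTop (nhds 0)

/-- The function `Φ(x, y) = ‖x‖ + Σ_{n=1}^∞ y_n^{2n}` on `Z = X × c₀(ℕ)`, where the
Lean coordinate `n : ℕ` plays the role of the paper's coordinate `n + 1`. -/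
noncomputable def PhiZ {X : Type*} [NormedAddCommGroup X] (z : X × (ℕ → ℝ)) : ℝ :=
  ‖z.1‖ + ∑' n : ℕ, (z.2 n) ^ (2 * (n + 1))

/-- The Minkowski functional `|||z||| = inf { λ > 0 : Φ(z/λ) ≤ 1 }` of `{Φ ≤ 1}`. -/
noncomputable def tnormZ {X : Type*} [NormedAddCommGroup X] [NormedSpace ℝ X]
    (z : X × (ℕ → ℝ)) : ℝ :=
  sInf {l : ℝ | 0 < l ∧ PhiZ (l⁻¹ • z) ≤ 1}

open Filter Topology

lemma apply_inv_eq_one_of_sInf_eq {f : ℝ → ℝ} {c : ℝ} (hc : 0 < c) (hf : ContinuousAt f c⁻¹)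
    (h : sInf {l : ℝ | 0 < l ∧ f l⁻¹ ≤ 1} = c) : f c⁻¹ = 1 := by
  set S := {l : ℝ | 0 < l ∧ f l⁻¹ ≤ 1}
  -- `sInf ∅ = 0` in `ℝ`, which `0 < c` rules out
  have hne : S.Nonempty := by
    by_contra hS
    rw [Set.not_nonempty_iff_eq_empty] at hS
    rw [hS, Real.sInf_empty] at h
    exact hc.ne h
  have hbdd : BddBelow S := ⟨0, fun l hl => hl.1.le⟩
  have hg : ContinuousAt (fun l => f l⁻¹) c := hf.comp (continuousAt_inv₀ hc.ne')
  refine le_antisymm ?_ (not_lt.1 fun hlt => ?_)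
  · have : (𝓝[S] c).NeBot := mem_closure_iff_nhdsWithin_neBot.1 (h ▸ csInf_mem_closure hne hbdd)
    exact le_of_tendsto (hg.mono_left nhdsWithin_le_nhds)
      (eventually_nhdsWithin_of_forall fun l (hl : l ∈ S) => hl.2)
  · -- if `f c⁻¹ < 1`, then `S` contains points just below `c`
    have hnear : ∀ᶠ l in 𝓝[<] c, 0 < l ∧ f l⁻¹ < 1 :=
      nhdsWithin_le_nhds ((eventually_gt_nhds hc).and (hg.eventually_lt_const hlt))
    obtain ⟨l, ⟨hl0, hl1⟩, hlc⟩ := (hnear.and self_mem_nhdsWithin).exists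
    have := csInf_le hbdd ⟨hl0, hl1.le⟩
    rw [h] at this
    exact this.not_gt hlc

section Series

variable {y y' : ℕ → ℝ} {e : ℕ → ℕ}

lemma summable_pow_of_tendsto_zero (hy : Tendsto y atTop (𝓝 0)) (he : ∀ n, n ≤ e n) :
    Summable fun n => y n ^ e n := by
  refine .of_norm_bounded_eventually_nat summable_geometric_two ?_
  filter_upwards [hy.eventually (Metric.closedBall_mem_nhds 0 (by norm_num : (0 : ℝ) < 1 / 2))]
    with n hn
  rw [dist_zero_right] at hn
  calc ‖y n ^ e n‖ = ‖y n‖ ^ e n := norm_pow _ _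
    _ ≤ (1 / 2) ^ e n := by gcongr
    _ ≤ (1 / 2) ^ n := pow_le_pow_of_le_one (by norm_num) (by norm_num) (he n)

lemma continuous_tsum_mul_pow (hy : Tendsto y atTop (𝓝 0)) (he : ∀ n, n ≤ e n) :
    Continuous fun t : ℝ => ∑' n, (t * y n) ^ e n := by
  refine continuous_iff_continuousAt.2 fun t₀ => ?_
  set R := |t₀| + 1
  have hu : Summable fun n => (R * |y n|) ^ e n :=
    summable_pow_of_tendsto_zero (by simpa using hy.abs.const_mul R) he
  have ht₀ : t₀ ∈ Metric.ball (0 : ℝ) R := by simp [R]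
  refine (continuousOn_tsum (fun n => by fun_prop) hu fun n t ht => ?_).continuousAt
    (Metric.isOpen_ball.mem_nhds ht₀)
  rw [mem_ball_zero_iff, Real.norm_eq_abs] at ht
  rw [norm_pow, norm_mul, Real.norm_eq_abs, Real.norm_eq_abs]
  gcongr

lemma midpoint_pow_le {p : ℕ} (hp : Even p) (a b : ℝ) :
    (2⁻¹ * (a + b)) ^ p ≤ (a ^ p + b ^ p) / 2 := by
  have := hp.convexOn_pow.2 (Set.mem_univ a) (Set.mem_univ b) (by norm_num : (0 : ℝ) ≤ 2⁻¹)
    (by norm_num : (0 : ℝ) ≤ 2⁻¹) (by norm_num)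
  simp only [smul_eq_mul] at this
  calc _ = (2⁻¹ * a + 2⁻¹ * b) ^ p := by ring
    _ ≤ _ := this
    _ = _ := by ring

lemma midpoint_pow_lt {p : ℕ} (hp : Even p) (hp0 : p ≠ 0) {a b : ℝ} (hab : a ≠ b) :
    (2⁻¹ * (a + b)) ^ p < (a ^ p + b ^ p) / 2 := by
  have := (hp.strictConvexOn_pow hp0).2 (Set.mem_univ a) (Set.mem_univ b) hab
    (by norm_num : (0 : ℝ) < 2⁻¹) (by norm_num : (0 : ℝ) < 2⁻¹) (by norm_num)
  simp only [smul_eq_mul] at this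
  calc _ = (2⁻¹ * a + 2⁻¹ * b) ^ p := by ring
    _ < _ := this
    _ = _ := by ring

lemma tsum_midpoint_pow_lt (hy : Tendsto y atTop (𝓝 0)) (hy' : Tendsto y' atTop (𝓝 0))
    (he : ∀ n, n ≤ e n) (heven : ∀ n, Even (e n)) (he0 : ∀ n, e n ≠ 0) (hne : y ≠ y') :
    ∑' n, (2⁻¹ * (y n + y' n)) ^ e n < (∑' n, y n ^ e n + ∑' n, y' n ^ e n) / 2 := by
  obtain ⟨k, hk⟩ := Function.ne_iff.1 hne
  have hs := summable_pow_of_tendsto_zero hy he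
  have hs' := summable_pow_of_tendsto_zero hy' he
  have hmid : Tendsto (fun n => 2⁻¹ * (y n + y' n)) atTop (𝓝 0) := by
    simpa using (hy.add hy').const_mul 2⁻¹
  rw [← hs.tsum_add hs', ← tsum_div_const]
  exact Summable.tsum_lt_tsum (fun n => midpoint_pow_le (heven n) _ _)
    (midpoint_pow_lt (heven k) (he0 k) hk) (summable_pow_of_tendsto_zero hmid he)
    ((hs.add hs').div_const 2)

end Series

section PhiZ

variable {X : Type*} [NormedAddCommGroup X] [NormedSpace ℝ X] {z w : X × (ℕ → ℝ)}

lemma continuous_PhiZ_smul (hz : IsC0Seq z.2) : Continuous fun t : ℝ => PhiZ (t • z) :=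
  (continuous_id.smul continuous_const).norm.add
    (continuous_tsum_mul_pow (e := fun n => 2 * (n + 1)) hz (by omega))

lemma PhiZ_inv_smul_eq_one (hz : IsC0Seq z.2) {c : ℝ} (hc : 0 < c) (h : tnormZ z = c) :
    PhiZ (c⁻¹ • z) = 1 :=
  apply_inv_eq_one_of_sInf_eq (f := fun t => PhiZ (t • z)) hc
    (continuous_PhiZ_smul hz).continuousAt h

lemma eq_of_PhiZ_midpoint_eq [StrictConvexSpace ℝ X] (hz : IsC0Seq z.2) (hw : IsC0Seq w.2)
    (hzw : PhiZ z = PhiZ w) (hmid : PhiZ ((2 : ℝ)⁻¹ • (z + w)) = PhiZ z) : z = w := by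
  have hmid' : ‖(2 : ℝ)⁻¹ • (z.1 + w.1)‖ + ∑' n, (2⁻¹ * (z.2 n + w.2 n)) ^ (2 * (n + 1)) =
      ‖z.1‖ + ∑' n, z.2 n ^ (2 * (n + 1)) := hmid
  have hzw' : ‖z.1‖ + ∑' n, z.2 n ^ (2 * (n + 1)) = ‖w.1‖ + ∑' n, w.2 n ^ (2 * (n + 1)) := hzw
  rw [norm_smul, Real.norm_of_nonneg (by norm_num)] at hmid'
  have hsnd : z.2 = w.2 := by
    by_contra hne
    have := tsum_midpoint_pow_lt (e := fun n => 2 * (n + 1)) hz hw (by omega)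
      (fun n => even_two_mul _) (by omega) hne
    linarith [norm_add_le z.1 w.1]
  simp only [hsnd, ← two_mul, inv_mul_cancel_left₀ (two_ne_zero' ℝ)] at hmid' hzw'
  have hnorm : ‖z.1‖ = ‖w.1‖ := by linarith
  have hfst : z.1 = w.1 := eq_of_norm_eq_of_norm_add_eq hnorm (by linarith)
  exact Prod.ext hfst hsnd

end PhiZ

theorem tnormZ_strictly_convex_general
    {X : Type*} [NormedAddCommGroup X] [NormedSpace ℝ X]
    (hX : ∀ x y : X, ‖x‖ = 1 → ‖y‖ = 1 → ‖x + y‖ = 2 → x = y)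
    (z w : X × (ℕ → ℝ)) (hz : IsC0Seq z.2) (hw : IsC0Seq w.2)
    (hz1 : tnormZ z = 1) (hw1 : tnormZ w = 1) (hzw : tnormZ (z + w) = 2) :
    z = w := by
  have : StrictConvexSpace ℝ X :=
    .of_norm_add fun x y hx hy hxy => hX x y hx hy hxy ▸ SameRay.rfl
  have hΦz : PhiZ z = 1 := by simpa using PhiZ_inv_smul_eq_one hz one_pos hz1
  have hΦw : PhiZ w = 1 := by simpa using PhiZ_inv_smul_eq_one hw one_pos hw1
  have hΦm : PhiZ ((2 : ℝ)⁻¹ • (z + w)) = 1 :=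
    PhiZ_inv_smul_eq_one (z := z + w)
      (by simpa using hz.add hw : Tendsto (fun n => z.2 n + w.2 n) atTop (𝓝 0)) two_pos hzw
  exact eq_of_PhiZ_midpoint_eq hz hw (hΦz.trans hΦw.symm) (hΦm.trans hΦz.symm)

/-- If `X` is strictly convex, then the norm `|||·|||` on `Z = X × c₀(ℕ)` is strictly
convex. -/
theorem tnormZ_strictly_convex
    {X : Type*} [NormedAddCommGroup X] [NormedSpace ℝ X] [CompleteSpace X]
    (hX : ∀ x y : X, ‖x‖ = 1 → ‖y‖ = 1 → ‖x + y‖ = 2 → x = y)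
    (z w : X × (ℕ → ℝ)) (hz : IsC0Seq z.2) (hw : IsC0Seq w.2)
    (hz1 : tnormZ z = 1) (hw1 : tnormZ w = 1) (hzw : tnormZ (z + w) = 2) :
    z = w :=
  tnormZ_strictly_convex_general hX z w hz hw hz1 hw1 hzw
end
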